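/- arXiv:1802.08886 — 5 statements merged into one kernel-verified Lean document; each statement's English description precedes it below -/
import Mathlib

section
/- Fix an integer m ≥ 1. The ℤ-submodule of F spanned by all restriction elements r(λ), λ ∈ ℤ^m_+, together with all elements e_{(μ+(1,…,1), p+2)} − e_{(μ,p)} for (μ,p) ∈ ℤ^{m−1}_+ × ℤ, is the whole of F. (Equivalently: for G = SU(1,n) the restriction map Res : K⁰(K) → K⁰(K_M) of Grothendieck groups of representations is surjective; in particular every highest weight is good. Theorem A(1).) -/
open scoped Classical

/-- `ℤ^k_+`: weakly decreasing integer tuples of length `k`. -/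
abbrev ZP (k : ℕ) : Type := {μ : Fin k → ℤ // ∀ i j : Fin k, i ≤ j → μ j ≤ μ i}

/-- The free `ℤ`-module `F = K⁰(K_M)` on the basis `ℤ^{m-1}_+ × ℤ`
(here `m = m0 + 1`, so the tuples have length `m0`). -/
abbrev FSU1 (m0 : ℕ) : Type := (ZP m0 × ℤ) →₀ ℤ

/-- The restriction element `r(λ) = Σ_{μ ⊆ λ} e_{(μ, |λ|−|μ|)}`, where `μ ⊆ λ`
means the interlacing `λ_1 ≥ μ_1 ≥ λ_2 ≥ … ≥ λ_m` (the class of `π_λ|_{K_M}`). -/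
noncomputable def rEl (m0 : ℕ) (l : Fin (m0 + 1) → ℤ) : FSU1 m0 :=
  ∑ μ ∈ Finset.Icc (fun i : Fin m0 => l i.succ) (fun i : Fin m0 => l i.castSucc),
    if h : ∀ i j : Fin m0, i ≤ j → μ j ≤ μ i then
      Finsupp.single ((⟨μ, h⟩ : ZP m0), (∑ i, l i) - ∑ i, μ i) 1
    else 0


/-! The differences `e_{(μ+1, p+2)} - e_{(μ, p)}` let one move `e_{(μ, p)}` along its
`(1,…,1; 2)`-orbit, so it suffices to produce `e_{(μ, μ_{m-1})}`. This is the top term of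
`r(μ_1, …, μ_{m-1}, μ_{m-1})`, whose remaining terms `e_{(ν, q)}` have `ν < μ` with the same last
entry; induction on the depth `∑ (μ_i - μ_{m-1})` finishes the proof. For `m = 1`,
`r(p) = e_{(∅, p)}` directly. -/

open Finset

def ZP.shift {k : ℕ} (μ : ZP k) (c : ℤ) : ZP k :=
  ⟨fun i => μ.1 i + c, fun i j h => add_le_add_left (μ.2 i j h) c⟩

lemma ZP.shift_zero {k : ℕ} (μ : ZP k) : μ.shift 0 = μ :=
  Subtype.ext <| funext fun _ => add_zero _

lemma ZP.shift_shift {k : ℕ} (μ : ZP k) (a b : ℤ) : (μ.shift a).shift b = μ.shift (a + b) :=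
  Subtype.ext <| funext fun _ => add_assoc _ _ _

def restrictionElements (m0 : ℕ) : Set (FSU1 m0) :=
  {x | ∃ l : Fin (m0 + 1) → ℤ, (∀ i j : Fin (m0 + 1), i ≤ j → l j ≤ l i) ∧ x = rEl m0 l}

def shiftDifferences (m0 : ℕ) : Set (FSU1 m0) :=
  {x | ∃ (μ : ZP m0) (p : ℤ), x = Finsupp.single (μ.shift 1, p + 2) 1 - Finsupp.single (μ, p) 1}

lemma Submodule.mem_iff_of_sub_mem {R M : Type*} [Ring R] [AddCommGroup M] [Module R M]
    {N : Submodule R M} {x y : M} (h : x - y ∈ N) : x ∈ N ↔ y ∈ N :=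
  ⟨fun hx => (N.sub_mem_iff_right hx).1 h, fun hy => (N.sub_mem_iff_left hy).1 h⟩

lemma single_shift_mem_iff {m0 : ℕ} {N : Submodule ℤ (FSU1 m0)}
    (hshift : shiftDifferences m0 ⊆ N) (μ : ZP m0) (p k : ℤ) :
    Finsupp.single (μ.shift k, p + 2 * k) 1 ∈ N ↔ Finsupp.single (μ, p) 1 ∈ N := by
  have step (k : ℤ) : Finsupp.single (μ.shift (k + 1), p + 2 * (k + 1)) 1
      - Finsupp.single (μ.shift k, p + 2 * k) 1 ∈ N := by
    refine hshift ⟨μ.shift k, p + 2 * k, ?_⟩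
    rw [ZP.shift_shift, mul_add, mul_one, add_assoc]
  induction k using Int.induction_on with
  | zero => rw [ZP.shift_zero, mul_zero, add_zero]
  | succ k ih => exact (Submodule.mem_iff_of_sub_mem (step k)).trans ih
  | pred k ih =>
    refine (Submodule.mem_iff_of_sub_mem (step (-k - 1))).symm.trans ?_
    rwa [sub_add_cancel]

section

variable {n : ℕ}

def ZP.depth (μ : ZP (n + 1)) : ℤ := ∑ i, (μ.1 i - μ.1 (Fin.last n))

lemma ZP.depth_nonneg (μ : ZP (n + 1)) : 0 ≤ μ.depth :=
  sum_nonneg fun i _ => sub_nonneg.2 (μ.2 i _ (Fin.le_last i))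

lemma ZP.depth_shift (μ : ZP (n + 1)) (c : ℤ) : (μ.shift c).depth = μ.depth := by
  simp only [ZP.depth, ZP.shift, add_sub_add_right_eq_sub]

lemma ZP.depth_lt_depth {μ ν : ZP (n + 1)} (hlt : ν.1 < μ.1)
    (hlast : ν.1 (Fin.last n) = μ.1 (Fin.last n)) : ν.depth < μ.depth := by
  obtain ⟨hle, i, hi⟩ := Pi.lt_def.1 hlt
  refine sum_lt_sum (fun j _ => ?_) ⟨i, mem_univ i, ?_⟩ <;> rw [hlast]
  · exact sub_le_sub_right (hle j) _
  · exact sub_lt_sub_right hi _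

-- `(μ_1, …, μ_{m-1}, μ_{m-1})`
def ZP.extendLast (μ : ZP (n + 1)) : ZP (n + 2) :=
  ⟨fun i => μ.1 ⟨min i n, by omega⟩,
    fun i j h => μ.2 _ _ (by simp only [Fin.le_def] at h ⊢; omega)⟩

lemma ZP.extendLast_castSucc (μ : ZP (n + 1)) (i : Fin (n + 1)) :
    μ.extendLast.1 i.castSucc = μ.1 i :=
  congrArg μ.1 (Fin.ext (by simp; omega))

lemma ZP.extendLast_succ_le (μ : ZP (n + 1)) (i : Fin (n + 1)) :
    μ.extendLast.1 i.succ ≤ μ.1 i :=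
  μ.2 _ _ (by simp [Fin.le_def]; omega)

lemma ZP.extendLast_succ_last (μ : ZP (n + 1)) :
    μ.extendLast.1 (Fin.last n).succ = μ.1 (Fin.last n) :=
  congrArg μ.1 (Fin.ext (by simp))

lemma ZP.sum_extendLast (μ : ZP (n + 1)) :
    ∑ i, μ.extendLast.1 i = ∑ i, μ.1 i + μ.1 (Fin.last n) := by
  rw [Fin.sum_univ_castSucc, ← Fin.succ_last, μ.extendLast_succ_last]
  simp only [ZP.extendLast_castSucc]

lemma rEl_extendLast_sub_single_mem (μ : ZP (n + 1)) {N : Submodule ℤ (FSU1 (n + 1))}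
    (hlower : ∀ ν : ZP (n + 1), ν.depth < μ.depth → ∀ q, Finsupp.single (ν, q) 1 ∈ N) :
    rEl (n + 1) μ.extendLast.1 - Finsupp.single (μ, μ.1 (Fin.last n)) 1 ∈ N := by
  have htop : μ.1 ∈ Icc (fun i => μ.extendLast.1 i.succ) (fun i => μ.extendLast.1 i.castSucc) :=
    mem_Icc.2 ⟨fun i => μ.extendLast_succ_le i, fun i => (μ.extendLast_castSucc i).ge⟩
  rw [rEl, ← add_sum_erase _ _ htop, dif_pos μ.2, μ.sum_extendLast, add_sub_cancel_left,
    add_sub_cancel_left]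
  refine sum_mem fun ν hν => ?_
  obtain ⟨hne, hν⟩ := mem_erase.1 hν
  obtain ⟨hlo, hhi⟩ := mem_Icc.1 hν
  have hhi : ν ≤ μ.1 := fun i => (hhi i).trans (μ.extendLast_castSucc i).le
  have hlast : ν (Fin.last n) = μ.1 (Fin.last n) :=
    le_antisymm (hhi _) (μ.extendLast_succ_last ▸ hlo (Fin.last n))
  split_ifs with hanti
  · exact hlower ⟨ν, hanti⟩ (ZP.depth_lt_depth (lt_of_le_of_ne hhi hne) hlast) _
  · exact zero_mem N

lemma single_mem_of_generators_subset {N : Submodule ℤ (FSU1 (n + 1))}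
    (hres : restrictionElements (n + 1) ⊆ N) (hshift : shiftDifferences (n + 1) ⊆ N)
    (μ : ZP (n + 1)) (p : ℤ) : Finsupp.single (μ, p) 1 ∈ N := by
  set k := μ.1 (Fin.last n) - p
  rw [← single_shift_mem_iff hshift μ p k,
    show p + 2 * k = (μ.shift k).1 (Fin.last n) by simp only [ZP.shift, k]; ring]
  have hlower := rEl_extendLast_sub_single_mem (μ.shift k) (N := N)
    fun ν hν q => single_mem_of_generators_subset hres hshift ν q
  exact (Submodule.mem_iff_of_sub_mem hlower).1 (hres ⟨_, (μ.shift k).extendLast.2, rfl⟩)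
termination_by μ.depth.toNat
decreasing_by
  rw [ZP.depth_shift] at hν
  have := ν.depth_nonneg
  omega

end

lemma rEl_zero (μ : ZP 0) (p : ℤ) : rEl 0 (fun _ => p) = Finsupp.single (μ, p) 1 := by
  simp only [rEl]
  rw [Subsingleton.elim (fun _ : Fin 0 => p) μ.1, Icc_self, sum_singleton, dif_pos μ.2]
  simp

/-- Theorem A(1): for `G = SU(1,n)` the restriction map
`Res : K⁰(K) → K⁰(K_M)` is surjective; equivalently, the `ℤ`-submodule of `F`
spanned by all restriction elements `r(λ)`, `λ ∈ ℤ^m_+`, together with all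
elements `e_{(μ+(1,…,1), p+2)} − e_{(μ,p)}`, is the whole of `F`. -/
theorem su_1n_restriction_surjective (m0 : ℕ) :
    Submodule.span ℤ
      ({x : FSU1 m0 | ∃ l : Fin (m0 + 1) → ℤ,
          (∀ i j : Fin (m0 + 1), i ≤ j → l j ≤ l i) ∧ x = rEl m0 l} ∪
        {x : FSU1 m0 | ∃ (μ : ZP m0) (p : ℤ),
          x = Finsupp.single
                ((⟨fun i => μ.1 i + 1, fun i j hij => by
                    exact add_le_add_left (μ.2 i j hij) 1⟩ : ZP m0), p + 2) 1
              - Finsupp.single (μ, p) 1}) = ⊤ := by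
  change Submodule.span ℤ (restrictionElements m0 ∪ shiftDifferences m0) = ⊤
  set N := Submodule.span ℤ (restrictionElements m0 ∪ shiftDifferences m0)
  have hres : restrictionElements m0 ⊆ N := fun _ hx => Submodule.subset_span (Or.inl hx)
  have hshift : shiftDifferences m0 ⊆ N := fun _ hx => Submodule.subset_span (Or.inr hx)
  have hsingle : ∀ a : ZP m0 × ℤ, Finsupp.single a 1 ∈ N := by
    rintro ⟨μ, p⟩
    cases m0 with
    | zero => exact rEl_zero μ p ▸ hres ⟨_, fun _ _ _ => le_rfl, rfl⟩
    | succ n => exact single_mem_of_generators_subset hres hshift μ p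
  rw [eq_top_iff, ← Finsupp.basisSingleOne.span_eq, Submodule.span_le]
  exact Set.range_subset_iff.2 fun a => hsingle a
end

section
/- The ℤ-span in F of the restriction elements {r(λ,p) : (λ,p) ∈ ℤ^n_{++} × ℤ} equals the ℤ-span of the set consisting of (i) the basis elements e_{(μ,q)} with μ_{n−1} = 0 and q ∈ ℤ, and (ii) the elements e_{(μ,q+s)} + e_{(μ*,q−s)} with μ_{n−1} ≠ 0 and q,s ∈ ℤ, where μ ranges over ℤ^{n−1}_{++}. (Description of the image Res(K⁰(K)) of the restriction map for G = SO₀(2,2n).) -/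
open scoped Classical

/-- The predicate defining `ℤ^k_{++}`: `λ_1 ≥ … ≥ λ_{k−1} ≥ |λ_k|`, equivalently
`|λ_j| ≤ λ_i` for all `i < j`. -/
def IsPP {k : ℕ} (l : Fin k → ℤ) : Prop := ∀ i j : Fin k, i < j → |l j| ≤ l i

/-- `ℤ^k_{++}` as a type. -/
abbrev ZPP (k : ℕ) : Type := {l : Fin k → ℤ // IsPP l}

/-- The free `ℤ`-module `F = K⁰(K_M)` on the basis `ℤ^{n−1}_{++} × ℤ` for
`G = SO₀(2,2n)` (here `n = n0 + 2`). -/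
abbrev FSO (n0 : ℕ) : Type := (ZPP (n0 + 1) × ℤ) →₀ ℤ

variable {n0 : ℕ}

/-- The interlacing conditions of the branching law from `SO(2n)` to `SO(2n−2)`:
`λ_i ≥ μ_i ≥ λ_{i+2}` for `1 ≤ i ≤ n−3`, `λ_{n−2} ≥ μ_{n−2} ≥ |λ_n|`, and
`λ_{n−1} ≥ |μ_{n−1}|` (written `0`-indexed, with `n = n0 + 2`). -/
def Interlace (l : Fin (n0 + 2) → ℤ) (μ : Fin (n0 + 1) → ℤ) : Prop :=
  (∀ i : ℕ, (h : i + 2 ≤ n0) →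
      μ ⟨i, by omega⟩ ≤ l ⟨i, by omega⟩ ∧ l ⟨i + 2, by omega⟩ ≤ μ ⟨i, by omega⟩) ∧
  (∀ _ : 1 ≤ n0,
      μ ⟨n0 - 1, by omega⟩ ≤ l ⟨n0 - 1, by omega⟩ ∧
        |l ⟨n0 + 1, by omega⟩| ≤ μ ⟨n0 - 1, by omega⟩) ∧
  |μ ⟨n0, by omega⟩| ≤ l ⟨n0, by omega⟩

/-- The tuple `(ℓ_1, …, ℓ_{n−1})` of the branching law (written `0`-indexed):
`ℓ_1 = λ_1 − max(λ_2, μ_1)`, `ℓ_i = min(λ_i, μ_{i−1}) − max(λ_{i+1}, μ_i)` for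
`2 ≤ i ≤ n−2`, and `ℓ_{n−1} = min(λ_{n−1}, μ_{n−2}) − max(|λ_n|, |μ_{n−1}|)`. -/
def lvec (l : Fin (n0 + 2) → ℤ) (μ : Fin (n0 + 1) → ℤ) : Fin (n0 + 1) → ℤ := fun i =>
  (if (i : ℕ) = 0 then l i.castSucc
    else min (l i.castSucc) (μ ⟨(i : ℕ) - 1, by have := i.isLt; omega⟩)) -
  (if (i : ℕ) = n0 then max |l (Fin.last (n0 + 1))| |μ (Fin.last n0)|
    else max (l i.succ) (μ i))

/-- The number `ℓ_n = sgn(λ_n)·sgn(μ_{n−1})·min(|λ_n|, |μ_{n−1}|)`. -/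
def lsgn (l : Fin (n0 + 2) → ℤ) (μ : Fin (n0 + 1) → ℤ) : ℤ :=
  Int.sign (l (Fin.last (n0 + 1))) * Int.sign (μ (Fin.last n0)) *
    min |l (Fin.last (n0 + 1))| |μ (Fin.last n0)|

/-- The multiplicity `m(k) = #{(k_1,…,k_{n−1}) ∈ ℤ^{n−1} : 0 ≤ k_i ≤ ℓ_i, Σ_i k_i = k}`. -/
noncomputable def mult (l : Fin (n0 + 2) → ℤ) (μ : Fin (n0 + 1) → ℤ) (k : ℤ) : ℕ :=
  ((Finset.Icc (0 : Fin (n0 + 1) → ℤ) (lvec l μ)).filter fun t => (∑ i, t i) = k).card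

/-- The restriction element
`r(λ,p) = Σ_μ Σ_{k=0}^{ℓ} m(k) · e_{(μ, p+ℓ_n+2k−ℓ)}`, the class of
`π_{λ,p}|_{K_M}` (the outer sum is over `μ ∈ ℤ^{n−1}_{++}` satisfying the
interlacing conditions, all of which lie in the box `[−λ_1, λ_1]^{n−1}`). -/
noncomputable def rSO (l : Fin (n0 + 2) → ℤ) (p : ℤ) : FSO n0 :=
  ∑ μ ∈ Finset.Icc (fun _ : Fin (n0 + 1) => -(l 0)) (fun _ : Fin (n0 + 1) => l 0),
    if h : IsPP μ ∧ Interlace l μ then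
      ∑ k ∈ Finset.Icc (0 : ℤ) (∑ i, lvec l μ i),
        (mult l μ k : ℤ) •
          Finsupp.single ((⟨μ, h.1⟩ : ZPP (n0 + 1)),
            p + lsgn l μ + 2 * k - ∑ i, lvec l μ i) 1
    else 0

/-- `μ* = (μ_1, …, μ_{n−2}, −μ_{n−1})`. -/
def starPP (μ : ZPP (n0 + 1)) : ZPP (n0 + 1) :=
  ⟨fun i => if i = Fin.last n0 then -(μ.1 i) else μ.1 i, by
    intro i j hij
    dsimp only
    have hij' : (i : ℕ) < (j : ℕ) := hij
    have hi : ¬(i = Fin.last n0) := by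
      intro h
      have : (i : ℕ) = n0 := by simpa using congrArg Fin.val h
      have := j.isLt
      omega
    rw [if_neg hi]
    by_cases hj : j = Fin.last n0
    · rw [if_pos hj, abs_neg]
      exact μ.2 i j hij
    · rw [if_neg hj]
      exact μ.2 i j hij⟩

/-!
Summands of `r(λ,p)` with `μ_{n−1} = 0` are multiples of generators of type (i). The summands
for `μ` and `μ*` have the same multiplicities `m(k)` and opposite `ℓ_n`, so together they are
a combination of generators `e_{(μ,q+ℓ_n)} + e_{(μ*,q−ℓ_n)}` of type (ii).

Conversely, let `μ_{n−1} ≥ 0` and `|c| ≤ μ_{n−1}`. For `λ = (μ, c)` the weights `μ` and `μ*`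
interlace with all `ℓ_i = 0` and `ℓ_n = ±c`, contributing `e_{(μ,p+c)} + e_{(μ*,p−c)}`, and every
other interlacing `ν` has `|ν_i| ≤ μ_i` for all `i`, hence a strictly smaller weight `Σ |ν_i|`.
By induction on this weight, `e_{(μ,p+c)} + e_{(μ*,p−c)}` lies in the span of the `r(λ,p)`
(for `μ_{n−1} = 0` this is `e_{(μ,p)}`), and shifts `|c| ≤ 1` already generate all shifts.
-/

theorem Finset.sum_mem_of_sign_involution {α M S : Type*} [DecidableEq α] [AddCommMonoid M]
    [SetLike S M] [AddSubmonoidClass S M] {s : S} {σ : α → α} (hσ : Function.Involutive σ)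
    {φ : α → ℤ} (hφ : ∀ a, φ (σ a) = -φ a) {T : Finset α} (hT : ∀ a ∈ T, σ a ∈ T)
    {f : α → M} (hzero : ∀ a ∈ T, φ a = 0 → f a ∈ s)
    (hpos : ∀ a ∈ T, 0 < φ a → f a + f (σ a) ∈ s) :
    ∑ a ∈ T, f a ∈ s := by
  have hneg : ∑ a ∈ T with φ a < 0, f a = ∑ a ∈ T with 0 < φ a, f (σ a) :=
    Finset.sum_nbij' σ σ (by simp +contextual [hT, hφ]) (by simp +contextual [hT, hφ])
      (fun a _ => hσ a) (fun a _ => hσ a) (fun a _ => by rw [hσ])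
  have hsplit : ∑ a ∈ T, f a = ∑ a ∈ T with φ a = 0, f a +
      ∑ a ∈ T with 0 < φ a, (f a + f (σ a)) := by
    rw [Finset.sum_add_distrib, ← hneg, ← Finset.sum_filter_add_sum_filter_not T (φ · = 0),
      ← Finset.sum_filter_add_sum_filter_not (T.filter (¬φ · = 0)) (0 < φ ·)]
    simp only [Finset.filter_filter]
    congr 2 <;> exact Finset.sum_congr (Finset.filter_congr fun a _ => by omega) fun _ _ => rfl
  rw [hsplit]
  exact add_mem (sum_mem fun a ha => (Finset.mem_filter.1 ha).elim (hzero a))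
    (sum_mem fun a ha => (Finset.mem_filter.1 ha).elim (hpos a))

/- With `g q t = u (q + t) + v (q - t)`, induct on `t` through
`g q (t + 1) = g (q + 1) t + g (q - t) 1 - g (q - t + 1) 0` and its mirror image. -/
theorem add_shift_mem_of_abs_le_one {M S : Type*} [AddCommGroup M] [SetLike S M]
    [AddSubgroupClass S M] {s : S} {u v : ℤ → M}
    (h : ∀ q t, |t| ≤ 1 → u (q + t) + v (q - t) ∈ s) (q t : ℤ) :
    u (q + t) + v (q - t) ∈ s := by
  have h0 : ∀ q, u q + v q ∈ s := fun q => by simpa using h q 0 (by simp)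
  induction t using Int.induction_on generalizing q with
  | zero => simpa using h0 q
  | succ t ih =>
    have e : u (q + (t + 1)) + v (q - (t + 1)) = (u (q + 1 + t) + v (q + 1 - t)) +
        (u (q - t + 1) + v (q - t - 1)) - (u (q - t + 1) + v (q - t + 1)) := by
      rw [show q + 1 + t = q + (t + 1) by ring, show q + 1 - t = q - t + 1 by ring,
        show q - t - 1 = q - (t + 1) by ring]
      abel
    rw [e]
    exact sub_mem (add_mem (ih _) (h _ 1 (by simp))) (h0 _)
  | pred t ih =>
    have e : u (q + (-t - 1)) + v (q - (-t - 1)) = (u (q - 1 + -t) + v (q - 1 - -t)) +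
        (u (q + t - 1) + v (q + t + 1)) - (u (q + t - 1) + v (q + t - 1)) := by
      rw [show q - 1 + -t = q + (-t - 1) by ring, show q - 1 - -t = q + t - 1 by ring,
        show q + t + 1 = q - (-t - 1) by ring]
      abel
    rw [e]
    exact sub_mem (add_mem (ih _) (by simpa [sub_eq_add_neg] using h (q + t) (-1) (by simp)))
      (h0 _)

theorem IsPP.antitone {k : ℕ} {μ : Fin k → ℤ} (hμ : IsPP μ) : Antitone μ := fun i j hij => by
  rcases hij.eq_or_lt with rfl | hlt
  · rfl
  · exact (le_abs_self _).trans (hμ i j hlt)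

theorem IsPP.nonneg_of_lt {k : ℕ} {μ : Fin k → ℤ} (hμ : IsPP μ) {i j : Fin k} (hij : i < j) :
    0 ≤ μ i :=
  (abs_nonneg _).trans (hμ i j hij)

def negLast (μ : Fin (n0 + 1) → ℤ) : Fin (n0 + 1) → ℤ :=
  fun i => if i = Fin.last n0 then -(μ i) else μ i

@[simp]
theorem negLast_last (μ : Fin (n0 + 1) → ℤ) : negLast μ (Fin.last n0) = -μ (Fin.last n0) :=
  if_pos rfl

theorem negLast_of_ne (μ : Fin (n0 + 1) → ℤ) {i : Fin (n0 + 1)} (hi : i ≠ Fin.last n0) :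
    negLast μ i = μ i :=
  if_neg hi

theorem negLast_of_val_ne (μ : Fin (n0 + 1) → ℤ) {i : Fin (n0 + 1)} (hi : (i : ℕ) ≠ n0) :
    negLast μ i = μ i :=
  negLast_of_ne μ fun h => hi (by simp [h])

@[simp]
theorem abs_negLast (μ : Fin (n0 + 1) → ℤ) (i : Fin (n0 + 1)) : |negLast μ i| = |μ i| := by
  unfold negLast
  split_ifs <;> simp

theorem negLast_involutive : Function.Involutive (negLast (n0 := n0)) := fun μ => by
  funext i
  unfold negLast
  split_ifs <;> simp

theorem negLast_eq_self_iff {μ : Fin (n0 + 1) → ℤ} : negLast μ = μ ↔ μ (Fin.last n0) = 0 := by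
  refine ⟨fun h => by have := congrFun h (Fin.last n0); simp at this; omega,
    fun h => funext fun i => ?_⟩
  unfold negLast
  split_ifs with hi
  · subst hi; simp [h]
  · rfl

theorem isPP_negLast_iff {μ : Fin (n0 + 1) → ℤ} : IsPP (negLast μ) ↔ IsPP μ :=
  ⟨fun h => negLast_involutive μ ▸ (starPP ⟨_, h⟩).2, fun h => (starPP ⟨μ, h⟩).2⟩

theorem interlace_negLast_iff {l : Fin (n0 + 2) → ℤ} {μ : Fin (n0 + 1) → ℤ} :
    Interlace l (negLast μ) ↔ Interlace l μ := by
  unfold Interlace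
  refine and_congr (forall_congr' fun i => forall_congr' fun hi => ?_)
    (and_congr (forall_congr' fun hn => ?_) ?_)
  · rw [negLast_of_val_ne μ (by simp; omega)]
  · rw [negLast_of_val_ne μ (by simp; omega)]
  · rw [abs_negLast]

theorem lvec_negLast (l : Fin (n0 + 2) → ℤ) (μ : Fin (n0 + 1) → ℤ) :
    lvec l (negLast μ) = lvec l μ := by
  funext i
  unfold lvec
  congr 1
  · split_ifs with h0
    · rfl
    · rw [negLast_of_val_ne μ (by simp; omega)]
  · split_ifs with hn
    · rw [abs_negLast]
    · rw [negLast_of_val_ne μ hn]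

theorem lsgn_negLast (l : Fin (n0 + 2) → ℤ) (μ : Fin (n0 + 1) → ℤ) :
    lsgn l (negLast μ) = -lsgn l μ := by
  simp only [lsgn, negLast_last, abs_neg, Int.sign_neg]
  ring

theorem mult_negLast (l : Fin (n0 + 2) → ℤ) (μ : Fin (n0 + 1) → ℤ) :
    mult l (negLast μ) = mult l μ := by
  unfold mult
  rw [lvec_negLast]

theorem starPP_val (μ : ZPP (n0 + 1)) : (starPP μ).1 = negLast μ.1 := rfl

theorem starPP_starPP (μ : ZPP (n0 + 1)) : starPP (starPP μ) = μ :=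
  Subtype.ext (negLast_involutive μ.1)

def resGens (μ : ZPP (n0 + 1)) : Set (FSO n0) :=
  {x | μ.1 (Fin.last n0) = 0 ∧ ∃ q : ℤ, x = Finsupp.single (μ, q) 1} ∪
  {x | μ.1 (Fin.last n0) ≠ 0 ∧ ∃ q s : ℤ,
    x = Finsupp.single (μ, q + s) 1 + Finsupp.single (starPP μ, q - s) 1}

theorem resGens_starPP (μ : ZPP (n0 + 1)) : resGens (starPP μ) = resGens μ := by
  have hpair : ∀ ν : ZPP (n0 + 1), ∀ q s : ℤ,
      Finsupp.single (starPP ν, q + s) 1 + Finsupp.single (starPP (starPP ν), q - s) 1 =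
        (Finsupp.single (ν, q + -s) 1 + Finsupp.single (starPP ν, q - -s) 1 : FSO n0) := by
    intro ν q s
    rw [starPP_starPP, add_comm, sub_neg_eq_add, ← sub_eq_add_neg]
  have hlast : (starPP μ).1 (Fin.last n0) = -μ.1 (Fin.last n0) := negLast_last μ.1
  ext x
  simp only [resGens, Set.mem_union, Set.mem_ofPred_eq, hlast, neg_eq_zero, ne_eq]
  refine or_congr (and_congr_right fun h0 => ?_) (and_congr_right fun _ => ⟨?_, ?_⟩)
  · rw [show starPP μ = μ from Subtype.ext (negLast_eq_self_iff.2 h0)]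
  · rintro ⟨q, s, rfl⟩
    exact ⟨q, -s, hpair μ q s⟩
  · rintro ⟨q, s, rfl⟩
    refine ⟨q, -s, ?_⟩
    rw [hpair, neg_neg]

noncomputable def rSOSummand (l : Fin (n0 + 2) → ℤ) (p : ℤ) (μ : Fin (n0 + 1) → ℤ) : FSO n0 :=
  if h : IsPP μ ∧ Interlace l μ then
    ∑ k ∈ Finset.Icc (0 : ℤ) (∑ i, lvec l μ i),
      (mult l μ k : ℤ) •
        Finsupp.single ((⟨μ, h.1⟩ : ZPP (n0 + 1)), p + lsgn l μ + 2 * k - ∑ i, lvec l μ i) 1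
  else 0

theorem rSO_eq_sum (l : Fin (n0 + 2) → ℤ) (p : ℤ) :
    rSO l p = ∑ μ ∈ Finset.Icc (fun _ => -(l 0)) (fun _ => l 0), rSOSummand l p μ :=
  rfl

theorem negLast_mem_Icc {a : ℤ} {μ : Fin (n0 + 1) → ℤ}
    (h : μ ∈ Finset.Icc (fun _ => -a) (fun _ => a)) :
    negLast μ ∈ Finset.Icc (fun _ => -a) (fun _ => a) := by
  simp only [Finset.mem_Icc, Pi.le_def] at h ⊢
  refine ⟨fun i => ?_, fun i => ?_⟩ <;>
  · unfold negLast
    split_ifs <;> have := h.1 i <;> have := h.2 i <;> omega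

section Summand

variable {S : Submodule ℤ (FSO n0)} {l : Fin (n0 + 2) → ℤ} {p : ℤ} {μ : Fin (n0 + 1) → ℤ}

theorem rSOSummand_mem (hμ0 : μ (Fin.last n0) = 0)
    (hS : ∀ hμ : IsPP μ, Interlace l μ → resGens ⟨μ, hμ⟩ ⊆ S) : rSOSummand l p μ ∈ S := by
  unfold rSOSummand
  split_ifs with h
  · exact Submodule.sum_mem _ fun k _ =>
      Submodule.smul_mem _ _ (hS h.1 h.2 (Or.inl ⟨hμ0, _, rfl⟩))
  · exact S.zero_mem

theorem rSOSummand_add_negLast_mem (hμ0 : μ (Fin.last n0) ≠ 0)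
    (hS : ∀ hμ : IsPP μ, Interlace l μ → resGens ⟨μ, hμ⟩ ⊆ S) :
    rSOSummand l p μ + rSOSummand l p (negLast μ) ∈ S := by
  unfold rSOSummand
  simp only [isPP_negLast_iff, interlace_negLast_iff, lvec_negLast, lsgn_negLast, mult_negLast]
  split_ifs with h
  · rw [← Finset.sum_add_distrib]
    refine Submodule.sum_mem _ fun k _ => ?_
    rw [← smul_add]
    refine Submodule.smul_mem _ _ (hS h.1 h.2 (Or.inr ⟨hμ0, p + 2 * k - ∑ i, lvec l μ i,
      lsgn l μ, ?_⟩))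
    congr 3 <;> ring
  · simp

theorem sum_rSOSummand_mem {T : Finset (Fin (n0 + 1) → ℤ)} (hT : ∀ μ ∈ T, negLast μ ∈ T)
    (hS : ∀ μ ∈ T, ∀ hμ : IsPP μ, Interlace l μ → resGens ⟨μ, hμ⟩ ⊆ S) :
    ∑ μ ∈ T, rSOSummand l p μ ∈ S :=
  Finset.sum_mem_of_sign_involution negLast_involutive (φ := fun μ => μ (Fin.last n0))
    (by simp) hT (fun μ hμ h0 => rSOSummand_mem h0 (hS μ hμ))
    (fun μ hμ hpos => rSOSummand_add_negLast_mem hpos.ne' (hS μ hμ))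

end Summand

theorem rSO_mem_span_resGens (l : Fin (n0 + 2) → ℤ) (p : ℤ) :
    rSO l p ∈ Submodule.span ℤ (⋃ μ, resGens μ) :=
  sum_rSOSummand_mem (fun _ => negLast_mem_Icc) fun μ _ hμ _ =>
    (Set.subset_iUnion resGens ⟨μ, hμ⟩).trans Submodule.subset_span

theorem Fin.snoc_mk_of_lt {β : Type*} {n : ℕ} (μ : Fin (n + 1) → β) (c : β) {i : ℕ}
    (hi : i < n + 1) : (Fin.snoc μ c : Fin (n + 2) → β) ⟨i, by omega⟩ = μ ⟨i, hi⟩ :=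
  Fin.snoc_castSucc (α := fun _ => β) (i := ⟨i, hi⟩) ..

section Snoc

variable {μ : Fin (n0 + 1) → ℤ} (hμ : IsPP μ) {c : ℤ} (hc : |c| ≤ μ (Fin.last n0))
include hμ hc

theorem isPP_snoc : IsPP (Fin.snoc μ c : Fin (n0 + 2) → ℤ) := by
  intro i j hij
  induction j using Fin.lastCases with
  | last =>
    induction i using Fin.lastCases with
    | last => exact absurd hij (lt_irrefl _)
    | cast i => simpa using hc.trans (hμ.antitone (Fin.le_last i))
  | cast j =>
    induction i using Fin.lastCases with
    | last => exact absurd hij (not_lt.2 (Fin.castSucc_lt_last j).le)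
    | cast i => simpa using hμ i j (Fin.castSucc_lt_castSucc_iff.1 hij)

theorem interlace_snoc_self : Interlace (Fin.snoc μ c) μ := by
  have hlast : 0 ≤ μ (Fin.last n0) := (abs_nonneg c).trans hc
  refine ⟨fun i hi => ?_, fun hn => ?_, ?_⟩
  · rw [Fin.snoc_mk_of_lt μ c (by omega), Fin.snoc_mk_of_lt μ c (by omega)]
    exact ⟨le_rfl, hμ.antitone (Fin.mk_le_mk.2 (by omega))⟩
  · rw [Fin.snoc_mk_of_lt μ c (by omega), show (⟨n0 + 1, by omega⟩ : Fin (n0 + 2)) = Fin.last _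
      from rfl, Fin.snoc_last]
    exact ⟨le_rfl, hc.trans (hμ.antitone (Fin.le_last _))⟩
  · rw [Fin.snoc_mk_of_lt μ c (by omega)]
    exact (abs_of_nonneg hlast).le

theorem lvec_snoc_self : lvec (Fin.snoc μ c) μ = 0 := by
  have hlast : 0 ≤ μ (Fin.last n0) := (abs_nonneg c).trans hc
  funext i
  simp only [lvec, Fin.snoc_castSucc, Fin.snoc_last, Pi.zero_apply]
  have hleft : (if (i : ℕ) = 0 then μ i else min (μ i) (μ ⟨i - 1, by omega⟩)) = μ i := by
    split_ifs
    · rfl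
    · exact min_eq_left (hμ.antitone (Fin.mk_le_mk.2 (by omega)))
  rw [hleft, sub_eq_zero]
  split_ifs with hn
  · obtain rfl : i = Fin.last n0 := Fin.ext hn
    rw [abs_of_nonneg hlast, max_eq_right hc]
  · rw [show i.succ = Fin.castSucc ⟨i + 1, by omega⟩ from Fin.ext (by simp), Fin.snoc_castSucc,
      max_eq_right (hμ.antitone (Fin.mk_le_mk.2 (by omega)))]

omit hμ in
theorem lsgn_snoc_self : lsgn (Fin.snoc μ c) μ = c := by
  simp only [lsgn, Fin.snoc_last]
  rcases ((abs_nonneg c).trans hc).eq_or_lt with h0 | hpos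
  · obtain rfl : c = 0 := abs_nonpos_iff.1 (h0 ▸ hc)
    simp
  · rw [Int.sign_eq_one_of_pos hpos, mul_one, min_eq_left (hc.trans (le_abs_self _)),
      Int.sign_mul_abs]

theorem rSOSummand_snoc_self (p : ℤ) :
    rSOSummand (Fin.snoc μ c) p μ = Finsupp.single (⟨μ, hμ⟩, p + c) 1 := by
  rw [rSOSummand, dif_pos ⟨hμ, interlace_snoc_self hμ hc⟩]
  simp [lvec_snoc_self hμ hc, lsgn_snoc_self hc, mult, Finset.filter_singleton]

theorem rSOSummand_snoc_negLast (p : ℤ) :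
    rSOSummand (Fin.snoc μ c) p (negLast μ) = Finsupp.single (starPP ⟨μ, hμ⟩, p - c) 1 := by
  rw [rSOSummand, dif_pos ⟨isPP_negLast_iff.2 hμ, interlace_negLast_iff.2
    (interlace_snoc_self hμ hc)⟩]
  simp [lvec_negLast, lsgn_negLast, lvec_snoc_self hμ hc, lsgn_snoc_self hc, mult,
    Finset.filter_singleton, sub_eq_add_neg]
  rfl

theorem self_mem_Icc_snoc :
    μ ∈ Finset.Icc (fun _ => -(Fin.snoc μ c : Fin (n0 + 2) → ℤ) 0)
      (fun _ => (Fin.snoc μ c : Fin (n0 + 2) → ℤ) 0) := by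
  have hlast : 0 ≤ μ (Fin.last n0) := (abs_nonneg c).trans hc
  have habs : ∀ i, |μ i| ≤ μ 0 := fun i => by
    rcases (Fin.zero_le i).eq_or_lt with rfl | hi
    · exact (abs_of_nonneg ((hlast.trans (hμ.antitone (Fin.le_last 0))))).le
    · exact hμ 0 i hi
  rw [← Fin.castSucc_zero, Fin.snoc_castSucc]
  exact Finset.mem_Icc.2 ⟨fun i => neg_le_of_abs_le (habs i), fun i => le_of_abs_le (habs i)⟩

end Snoc

def weight (μ : Fin (n0 + 1) → ℤ) : ℕ := ∑ i, (μ i).natAbs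

theorem weight_negLast (μ : Fin (n0 + 1) → ℤ) : weight (negLast μ) = weight μ := by
  unfold weight
  congr 1 with i
  unfold negLast
  split_ifs <;> simp

theorem abs_le_of_interlace_snoc {μ ν : Fin (n0 + 1) → ℤ} {c : ℤ} (hν : IsPP ν)
    (h : Interlace (Fin.snoc μ c) ν) (i : Fin (n0 + 1)) : |ν i| ≤ μ i := by
  obtain ⟨h1, h2, h3⟩ := h
  induction i using Fin.lastCases with
  | last =>
    rwa [Fin.snoc_mk_of_lt μ c (by omega)] at h3
  | cast i =>
    rw [abs_of_nonneg (hν.nonneg_of_lt (Fin.castSucc_lt_last i))]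
    by_cases hi : (i : ℕ) + 2 ≤ n0
    · have := (h1 i hi).1
      rwa [Fin.snoc_mk_of_lt μ c (by omega)] at this
    · have := (h2 (by omega)).1
      rw [Fin.snoc_mk_of_lt μ c (by omega)] at this
      rwa [show i.castSucc = ⟨n0 - 1, by omega⟩ from Fin.ext (by simp; omega)]

theorem weight_lt_of_interlace_snoc {μ ν : Fin (n0 + 1) → ℤ} {c : ℤ} (hν : IsPP ν)
    (h : Interlace (Fin.snoc μ c) ν) (hne : ν ≠ μ) (hne' : ν ≠ negLast μ) :
    weight ν < weight μ := by
  have hle := abs_le_of_interlace_snoc hν h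
  obtain ⟨i, hi⟩ : ∃ i, |ν i| < μ i := by
    by_contra! hge
    have heq : ∀ i, |ν i| = μ i := fun i => (hle i).antisymm (hge i)
    have hinit : ∀ i : Fin n0, ν i.castSucc = μ i.castSucc := fun i => by
      rw [← heq, abs_of_nonneg (hν.nonneg_of_lt (Fin.castSucc_lt_last i))]
    rcases (abs_eq ((abs_nonneg _).trans (hle (Fin.last n0)))).1 (heq (Fin.last n0)) with hl | hl
    · exact hne (funext fun i => Fin.lastCases hl hinit i)
    · refine hne' (funext fun i => Fin.lastCases (by simpa using hl) (fun i => ?_) i)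
      rw [negLast_of_ne _ (Fin.castSucc_lt_last i).ne, hinit]
  refine Finset.sum_lt_sum (fun j _ => ?_) ⟨i, Finset.mem_univ _, ?_⟩
  · have := abs_le.1 (hle j); omega
  · have := abs_lt.1 hi; omega

section Induction

variable {S : Submodule ℤ (FSO n0)} (hS : ∀ l p, IsPP l → rSO l p ∈ S)
include hS

theorem sum_pair_rSOSummand_snoc_mem {μ : Fin (n0 + 1) → ℤ} (hμ : IsPP μ) {c : ℤ}
    (hc : |c| ≤ μ (Fin.last n0)) (p : ℤ)
    (ih : ∀ ν : ZPP (n0 + 1), weight ν.1 < weight μ → resGens ν ⊆ S) :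
    ∑ ν ∈ {μ, negLast μ}, rSOSummand (Fin.snoc μ c) p ν ∈ S := by
  have hmem := self_mem_Icc_snoc hμ hc
  set box := Finset.Icc (fun _ : Fin (n0 + 1) => -(Fin.snoc μ c : Fin (n0 + 2) → ℤ) 0)
    (fun _ => (Fin.snoc μ c : Fin (n0 + 2) → ℤ) 0)
  have hsub : {μ, negLast μ} ⊆ box :=
    Finset.insert_subset hmem (Finset.singleton_subset_iff.2 (negLast_mem_Icc hmem))
  have hrest : ∑ ν ∈ box \ {μ, negLast μ}, rSOSummand (Fin.snoc μ c) p ν ∈ S := by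
    refine sum_rSOSummand_mem (fun ν hν => ?_) fun ν hν hνPP hI =>
      ih ⟨ν, hνPP⟩ (weight_lt_of_interlace_snoc hνPP hI ?_ ?_)
    · simp only [Finset.mem_sdiff, Finset.mem_insert, Finset.mem_singleton] at hν ⊢
      rw [negLast_involutive.eq_iff, negLast_involutive.injective.eq_iff]
      exact ⟨negLast_mem_Icc hν.1, by tauto⟩
    all_goals
      simp only [Finset.mem_sdiff, Finset.mem_insert, Finset.mem_singleton] at hν
      tauto
  have hfull := hS _ p (isPP_snoc hμ hc)
  rw [rSO_eq_sum, ← Finset.sum_sdiff hsub] at hfull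
  exact (Submodule.add_mem_iff_right _ hrest).1 hfull

theorem resGens_subset_of_weight_lt {μ : ZPP (n0 + 1)} (hlast : 0 ≤ μ.1 (Fin.last n0))
    (ih : ∀ ν : ZPP (n0 + 1), weight ν.1 < weight μ.1 → resGens ν ⊆ S) : resGens μ ⊆ S := by
  obtain ⟨μ, hμ⟩ := μ
  dsimp only at hlast
  have hpair := fun c p hc => sum_pair_rSOSummand_snoc_mem hS hμ (c := c) hc p ih
  rintro x (⟨h0, q, rfl⟩ | ⟨h0, q, s, rfl⟩) <;> dsimp only at h0
  · have := hpair 0 q (by simpa using hlast)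
    rwa [negLast_eq_self_iff.2 h0, Finset.pair_eq_singleton, Finset.sum_singleton,
      rSOSummand_snoc_self hμ (by simpa using hlast), add_zero] at this
  · have hne : μ ≠ negLast μ := fun h => h0 (negLast_eq_self_iff.1 h.symm)
    refine add_shift_mem_of_abs_le_one (u := fun a => (Finsupp.single (⟨μ, hμ⟩, a) 1 : FSO n0))
      (v := fun b => Finsupp.single (starPP ⟨μ, hμ⟩, b) 1) (fun q t ht => ?_) q s
    have ht' : |t| ≤ μ (Fin.last n0) := ht.trans (by omega)
    have := hpair t q ht'
    rwa [Finset.sum_pair hne, rSOSummand_snoc_self hμ ht', rSOSummand_snoc_negLast hμ ht'] at this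

end Induction

theorem resGens_subset_span_rSO (μ : ZPP (n0 + 1)) :
    resGens μ ⊆ Submodule.span ℤ {x | ∃ (l : Fin (n0 + 2) → ℤ) (p : ℤ), IsPP l ∧ x = rSO l p} := by
  induction hw : weight μ.1 using Nat.strong_induction_on generalizing μ with
  | _ w ih =>
  wlog hlast : 0 ≤ μ.1 (Fin.last n0) generalizing μ
  · rw [← resGens_starPP]
    exact this _ ((weight_negLast μ.1).trans hw) (by simp [starPP_val]; omega)
  exact resGens_subset_of_weight_lt
    (fun l p hl => Submodule.subset_span (by exact ⟨l, p, hl, rfl⟩)) hlast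
    fun ν hν => ih _ (hw ▸ hν) ν rfl

theorem iUnion_resGens :
    ⋃ μ, resGens μ =
      {x : FSO n0 | ∃ (μ : ZPP (n0 + 1)) (q : ℤ),
          μ.1 (Fin.last n0) = 0 ∧ x = Finsupp.single (μ, q) 1} ∪
        {x : FSO n0 | ∃ (μ : ZPP (n0 + 1)) (q s : ℤ), μ.1 (Fin.last n0) ≠ 0 ∧
          x = Finsupp.single (μ, q + s) 1 + Finsupp.single (starPP μ, q - s) 1} := by
  ext x
  simp only [resGens, Set.mem_union, Set.mem_iUnion, Set.mem_ofPred_eq]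
  aesop

/-- Description of the image `Res(K⁰(K))` of the restriction map for
`G = SO₀(2,2n)` (with `n = n0 + 2`): the `ℤ`-span of the restriction elements
`r(λ,p)` equals the `ℤ`-span of the basis elements `e_{(μ,q)}` with
`μ_{n−1} = 0` together with the elements `e_{(μ,q+s)} + e_{(μ*,q−s)}` with
`μ_{n−1} ≠ 0`. -/
theorem so_image_of_restriction (n0 : ℕ) :
    Submodule.span ℤ
        {x : FSO n0 | ∃ (l : Fin (n0 + 2) → ℤ) (p : ℤ), IsPP l ∧ x = rSO l p}
      = Submodule.span ℤ
        ({x : FSO n0 | ∃ (μ : ZPP (n0 + 1)) (q : ℤ),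
            μ.1 (Fin.last n0) = 0 ∧ x = Finsupp.single (μ, q) 1} ∪
          {x : FSO n0 | ∃ (μ : ZPP (n0 + 1)) (q s : ℤ),
            μ.1 (Fin.last n0) ≠ 0 ∧
              x = Finsupp.single (μ, q + s) 1 + Finsupp.single (starPP μ, q - s) 1}) := by
  rw [← iUnion_resGens]
  refine le_antisymm (Submodule.span_le.2 ?_)
    (Submodule.span_le.2 (Set.iUnion_subset resGens_subset_span_rSO))
  rintro _ ⟨l, p, -, rfl⟩
  exact rSO_mem_span_resGens l p
end

section
/- Fix an integer m ≥ 1 and write (1)_j = (1,…,1,0,…,0) for the tuple with j ones (of length m in the argument of r, and of length m−1 in the basis indices). Then in F one has the identity Σ_{j=0}^{m} (−1)^{j−1} r((1)_j, (0,−j)) = Σ_{j=1}^{m} (−1)^{j−1} e_{((1)_{j−1}, −j, 1)}. (This expresses that (Σ_j (−1)^j Λ^j p̃_+^{[ev]}) ⊗ τ_{0,−1,1} lies in the image Res(K⁰(K)) of the restriction map for G = SU(m,2).) -/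
open scoped Classical

/-- The free `ℤ`-module `F = K⁰(K_M)` on the basis `ℤ^{m−1}_+ × ℤ × ℤ` for
`G = SU(m,2)` (here `m = m0 + 1`, so the first components have length `m0`). -/
abbrev FSU2 (m0 : ℕ) : Type := (ZP m0 × ℤ × ℤ) →₀ ℤ

/-- The restriction element
`r(λ',λ'') = Σ_{μ'⊆λ'} Σ_{λ''_1 ≥ μ'' ≥ λ''_2} e_{(μ', μ'', |λ'|+|λ''|−|μ'|−μ'')}`,
the class of `π_{λ',λ''}|_{K_M}`. -/
noncomputable def rSU2 (m0 : ℕ) (l : Fin (m0 + 1) → ℤ) (d e : ℤ) : FSU2 m0 :=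
  ∑ μ ∈ Finset.Icc (fun i : Fin m0 => l i.succ) (fun i : Fin m0 => l i.castSucc),
    ∑ q ∈ Finset.Icc e d,
      if h : ∀ i j : Fin m0, i ≤ j → μ j ≤ μ i then
        Finsupp.single ((⟨μ, h⟩ : ZP m0), q, ((∑ i, l i) + d + e) - (∑ i, μ i) - q) 1
      else 0

/-- The tuple `(1)_j = (1, …, 1, 0, …, 0)` with `j` ones. -/
def onesTuple (k j : ℕ) : Fin k → ℤ := fun i => if (i : ℕ) < j then 1 else 0

/-!
Write `e(a, q) = e_{((1)_a, q, -a-q)}`. The tuples of length `m - 1` interlacing `(1)_j` are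
`(1)_{j-1}` and, for `j < m`, `(1)_j`; so `r((1)_j, (0, -j)) = Σ_a Σ_{q=-j}^{0} e(a, q)` with
`a ∈ {j - 1, j} ∩ [0, m - 1]`. Exchanging the sums over `j` and `a`, each `a` contributes `(-1)^a`
times the difference of the `q`-sums over `[-a-1, 0]` and `[-a, 0]`, i.e. the single term
`e(a, -a-1) = e_{((1)_a, -a-1, 1)}`.
-/

lemma onesTuple_antitone (k a : ℕ) : Antitone (onesTuple k a) := by
  intro i j hij
  have : (i : ℕ) ≤ j := hij
  simp only [onesTuple]
  split_ifs <;> omega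

lemma sum_onesTuple (k a : ℕ) : ∑ i, onesTuple k a i = (min k a : ℕ) := by
  simp [onesTuple, Finset.sum_boole, Fin.card_filter_val_lt]

lemma onesTuple_injOn (k : ℕ) : Set.InjOn (onesTuple k) (Set.Iic k) := by
  intro a ha b hb hab
  have := congrArg (fun μ => ∑ i, μ i) hab
  simp only [sum_onesTuple] at this
  simp only [Set.mem_Iic] at ha hb
  omega

lemma onesTuple_comp_succ (k j : ℕ) :
    (fun i : Fin k => onesTuple (k + 1) j i.succ) = onesTuple k (j - 1) := by
  funext i
  simp only [onesTuple, Fin.val_succ]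
  split_ifs <;> omega

lemma onesTuple_comp_castSucc (k j : ℕ) :
    (fun i : Fin k => onesTuple (k + 1) j i.castSucc) = onesTuple k j :=
  rfl

/- Between `(1)_{j-1}` and `(1)_j` only the coordinate `j - 1` is free; the `min` accounts for
`j = k + 1`, where the two tuples coincide. -/
lemma Icc_onesTuple {k j : ℕ} (hj : j ≤ k + 1) :
    Finset.Icc (onesTuple k (j - 1)) (onesTuple k j) =
      (Finset.Icc (j - 1) (min j k)).image (onesTuple k) := by
  ext μ
  simp only [Finset.mem_Icc, Finset.mem_image, Pi.le_def]
  constructor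
  · rintro ⟨hlo, hhi⟩
    by_cases hfree : ∃ i : Fin k, (i : ℕ) = j - 1 ∧ 1 ≤ μ i
    · obtain ⟨i, hi, hμi⟩ := hfree
      refine ⟨j, ?_, funext fun i' => ?_⟩
      · have := hhi i
        simp only [onesTuple] at this
        split_ifs at this <;> omega
      · have hμi' : (i' : ℕ) = j - 1 → μ i' = μ i := fun h => congrArg μ (Fin.ext (h.trans hi.symm))
        have := hlo i'
        have := hhi i'
        simp only [onesTuple] at *
        split_ifs at * <;> omega
    · push Not at hfree
      refine ⟨j - 1, by omega, funext fun i => ?_⟩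
      have := hlo i
      have := hhi i
      have := hfree i
      simp only [onesTuple] at *
      split_ifs at * <;> omega
  · rintro ⟨a, ha, rfl⟩
    exact ⟨fun i => by simp only [onesTuple]; split_ifs <;> omega,
      fun i => by simp only [onesTuple]; split_ifs <;> omega⟩

noncomputable def eOnes (m0 a : ℕ) (q : ℤ) : FSU2 m0 :=
  Finsupp.single (⟨onesTuple m0 a, onesTuple_antitone m0 a⟩, q, -(a : ℤ) - q) 1

lemma rSU2_onesTuple {m0 j : ℕ} (hj : j ≤ m0 + 1) :
    rSU2 m0 (onesTuple (m0 + 1) j) 0 (-(j : ℤ)) =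
      ∑ a ∈ Finset.Icc (j - 1) (min j m0), ∑ q ∈ Finset.Icc (-(j : ℤ)) 0, eOnes m0 a q := by
  rw [rSU2, onesTuple_comp_succ, onesTuple_comp_castSucc, Icc_onesTuple hj,
    Finset.sum_image ((onesTuple_injOn m0).mono fun a ha => by
      simp only [Finset.coe_Icc, Set.mem_Icc, Set.mem_Iic] at ha ⊢; omega)]
  refine Finset.sum_congr rfl fun a ha => Finset.sum_congr rfl fun q _ => ?_
  rw [dif_pos fun i i' => @onesTuple_antitone m0 a i i', eOnes, sum_onesTuple, sum_onesTuple]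
  simp only [Finset.mem_Icc] at ha
  congr 3
  push_cast
  omega

lemma sum_Icc_neg_succ {M : Type*} [AddCommMonoid M] (f : ℤ → M) (n : ℕ) :
    ∑ q ∈ Finset.Icc (-((n + 1 : ℕ) : ℤ)) 0, f q =
      f (-((n + 1 : ℕ) : ℤ)) + ∑ q ∈ Finset.Icc (-(n : ℤ)) 0, f q := by
  rw [← Finset.insert_Icc_add_one_left_eq_Icc (by omega), Finset.sum_insert (by simp)]
  push_cast
  rw [show -((n : ℤ) + 1) + 1 = -n by ring]

/-- For `G = SU(m,2)` (with `m = m0 + 1 ≥ 1`) one has the identity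
`Σ_{j=0}^{m} (−1)^{j−1} r((1)_j, (0,−j)) = Σ_{j=1}^{m} (−1)^{j−1} e_{((1)_{j−1}, −j, 1)}`
in `F`; this expresses that `(Σ_j (−1)^j Λ^j p̃₊^{[ev]}) ⊗ τ_{0,−1,1}` lies in the
image of the restriction map. -/
theorem exterior_power_ansatz_identity (m0 : ℕ) :
    ∑ j ∈ Finset.range (m0 + 2),
        (-1 : ℤ) ^ (j + 1) • rSU2 m0 (onesTuple (m0 + 1) j) 0 (-(j : ℤ))
      = ∑ j ∈ Finset.Icc 1 (m0 + 1),
          (-1 : ℤ) ^ (j + 1) •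
            Finsupp.single
              ((⟨onesTuple m0 (j - 1), fun a b hab => by
                  have hab' : (a : ℕ) ≤ (b : ℕ) := hab
                  simp only [onesTuple]
                  split_ifs <;> omega⟩ : ZP m0), -(j : ℤ), 1) 1 := by
  set S : ℕ → ℕ → FSU2 m0 := fun a j => ∑ q ∈ Finset.Icc (-(j : ℤ)) 0, eOnes m0 a q
  calc _ = ∑ j ∈ Finset.range (m0 + 2), ∑ a ∈ Finset.Icc (j - 1) (min j m0),
        (-1 : ℤ) ^ (j + 1) • S a j := by
        refine Finset.sum_congr rfl fun j hj => ?_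
        rw [rSU2_onesTuple (Nat.le_of_lt_succ (Finset.mem_range.mp hj)), Finset.smul_sum]
    _ = ∑ a ∈ Finset.range (m0 + 1), ∑ j ∈ Finset.Icc a (a + 1), (-1 : ℤ) ^ (j + 1) • S a j :=
        Finset.sum_comm' fun j a => by simp only [Finset.mem_range, Finset.mem_Icc]; omega
    _ = ∑ a ∈ Finset.range (m0 + 1), (-1 : ℤ) ^ a • eOnes m0 a (-((a + 1 : ℕ) : ℤ)) := by
        refine Finset.sum_congr rfl fun a _ => ?_
        rw [Finset.sum_Icc_succ_top (by omega), Finset.Icc_self, Finset.sum_singleton]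
        simp only [S, sum_Icc_neg_succ, pow_succ]
        module
    _ = _ := by
        rw [← Finset.Ico_add_one_right_eq_Icc, Finset.sum_Ico_eq_sum_range, Nat.add_sub_cancel]
        refine Finset.sum_congr rfl fun a _ => ?_
        rw [add_comm 1 a]
        congr 1
        · ring
        · simp [eOnes]
end

section
/- For all λ' ∈ ℤ³_+ and λ'' ∈ ℤ²_+ one has I(r(λ',λ'')) = 0. Consequently the functional I vanishes on the ℤ-span of all restriction elements r(λ',λ''), i.e. on the image Res(K⁰(K)) of the restriction map for G = SU(3,2) ≅ SU(2,3). -/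
open scoped Classical

/-- `ℤ²_+`: weakly decreasing integer pairs. -/
abbrev ZP2 : Type := {v : ℤ × ℤ // v.2 ≤ v.1}

/-- The free `ℤ`-module `F = K⁰(K_M)` on the basis `ℤ²_+ × ℤ × ℤ` for
`G = SU(3,2)`. -/
abbrev FSU32 : Type := (ZP2 × ℤ × ℤ) →₀ ℤ

/-- The restriction element
`r(λ',λ'') = Σ_{μ'⊆λ'} Σ_{λ''_1 ≥ μ'' ≥ λ''_2} e_{(μ', μ'', |λ'|+|λ''|−|μ'|−μ'')}`
for `λ' = (a,b,c) ∈ ℤ³_+` and `λ'' = (d,e) ∈ ℤ²_+`. -/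
noncomputable def rSU32 (a b c d e : ℤ) : FSU32 :=
  ∑ x ∈ Finset.Icc b a, ∑ y ∈ Finset.Icc c b, ∑ z ∈ Finset.Icc e d,
    if h : y ≤ x then
      Finsupp.single ((⟨(x, y), h⟩ : ZP2), z, (a + b + c + d + e) - x - y - z) 1
    else 0

/-- The `ℤ`-linear functional `I` on `F`, given on basis elements by
`I(e_{(μ',μ'',p)}) = (μ'_1+μ''−p) + (μ'_2+μ''−p) + (μ'_1+μ''−p)² − (μ'_2+μ''−p)²`. -/
noncomputable def Ifun (v : FSU32) : ℤ :=
  v.sum fun w n => n *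
    ((w.1.1.1 + w.2.1 - w.2.2) + (w.1.1.2 + w.2.1 - w.2.2)
      + (w.1.1.1 + w.2.1 - w.2.2) ^ 2 - (w.1.1.2 + w.2.1 - w.2.2) ^ 2)

/-!
On the basis element indexed by `μ' = (x, y)`, `μ'' = z` and `p = |λ'| + |λ''| - x - y - z`,
the functional `I` takes the value `(1 + x - y) * (3x + 3y + 4z - 2(|λ'| + |λ''|))`. This is
affine in `z`, so summing over `λ''_2 ≤ z ≤ λ''_1` replaces `4z` by `2|λ''|` and leaves
`(λ''_1 - λ''_2 + 1) * (1 + x - y) * (3x + 3y - 2|λ'|)`. Summing this over the interlacing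
pairs `λ'_2 ≤ x ≤ λ'_1`, `λ'_3 ≤ y ≤ λ'_2` gives zero, by the closed forms of `∑ x` and
`∑ x²` over an interval. Finally `I` is linear, so it vanishes on the span.
-/

open Finset

namespace Int

theorem sum_Icc_id_mul_two {m n : ℤ} (h : m ≤ n + 1) :
    (∑ x ∈ Icc m n, x) * 2 = (n + m) * (n + 1 - m) := by
  induction n, (show m - 1 ≤ n by omega) using Int.leInduction with
  | base => simp
  | succ n hn ih =>
    rw [← insert_Icc_right_eq_Icc_add_one (by omega), sum_insert (by simp), add_mul, ih (by omega)]
    ring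

theorem sum_Icc_sq_mul_six {m n : ℤ} (h : m ≤ n + 1) :
    (∑ x ∈ Icc m n, x ^ 2) * 6 = n * (n + 1) * (2 * n + 1) - (m - 1) * m * (2 * m - 1) := by
  induction n, (show m - 1 ≤ n by omega) using Int.leInduction with
  | base => simp; ring
  | succ n hn ih =>
    rw [← insert_Icc_right_eq_Icc_add_one (by omega), sum_insert (by simp), add_mul, ih (by omega)]
    ring

theorem sum_Icc_add_two_mul {m n : ℤ} (h : m ≤ n + 1) (A B : ℤ) :
    ∑ x ∈ Icc m n, (A + 2 * B * x) = (n + 1 - m) * (A + B * (m + n)) := by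
  rw [sum_add_distrib, ← mul_sum, sum_const, nsmul_eq_mul, Int.card_Icc_of_le _ _ h]
  linear_combination B * sum_Icc_id_mul_two h

end Int

noncomputable def IfunLinear : FSU32 →ₗ[ℤ] ℤ where
  toFun := Ifun
  map_add' _ _ := Finsupp.sum_add_index' (by simp) (fun _ _ _ => by ring)
  map_smul' _ _ := by simp [Ifun, Finsupp.sum_smul_index', Finsupp.mul_sum, mul_assoc]

theorem IfunLinear_apply (v : FSU32) : IfunLinear v = Ifun v := rfl

theorem Ifun_rSU32 {a b c d e : ℤ} (hed : e ≤ d + 1) :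
    Ifun (rSU32 a b c d e) =
      (d + 1 - e) *
        ∑ x ∈ Icc b a, ∑ y ∈ Icc c b, (1 + x - y) * (3 * x + 3 * y - 2 * (a + b + c)) := by
  change IfunLinear _ = _
  simp only [rSU32, map_sum, mul_sum]
  refine sum_congr rfl fun x hx => sum_congr rfl fun y hy => ?_
  have hyx : y ≤ x := (mem_Icc.mp hy).2.trans (mem_Icc.mp hx).1
  calc _ = ∑ z ∈ Icc e d,
        ((1 + x - y) * (3 * x + 3 * y - 2 * (a + b + c + d + e)) + 2 * (2 * (1 + x - y)) * z) :=
        sum_congr rfl fun z _ => by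
          rw [dif_pos hyx, IfunLinear_apply, Ifun, Finsupp.sum_single_index (zero_mul _)]
          ring
    _ = _ := by
      rw [Int.sum_Icc_add_two_mul hed]
      ring

theorem sum_Icc_Icc_eq_zero {a b c : ℤ} (hab : b ≤ a + 1) (hbc : c ≤ b + 1) :
    ∑ x ∈ Icc b a, ∑ y ∈ Icc c b, (1 + x - y) * (3 * x + 3 * y - 2 * (a + b + c)) = 0 := by
  have hsplit : ∀ x y : ℤ, (1 + x - y) * (3 * x + 3 * y - 2 * (a + b + c)) =
      (3 * x ^ 2 + x * (3 - 2 * (a + b + c)) - 2 * (a + b + c))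
        + (y * (3 + 2 * (a + b + c)) - 3 * y ^ 2) := by
    intros; ring
  suffices (∑ x ∈ Icc b a, ∑ y ∈ Icc c b,
      (1 + x - y) * (3 * x + 3 * y - 2 * (a + b + c))) * 6 = 0 by omega
  simp only [hsplit, sum_add_distrib, sum_sub_distrib, sum_const, ← mul_sum, ← sum_mul,
    nsmul_eq_mul, Int.card_Icc_of_le _ _ hab, Int.card_Icc_of_le _ _ hbc]
  linear_combination (3 * (b + 1 - c)) * Int.sum_Icc_sq_mul_six hab
    + (3 * (b + 1 - c) * (3 - 2 * (a + b + c))) * Int.sum_Icc_id_mul_two hab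
    + (3 * (a + 1 - b) * (3 + 2 * (a + b + c))) * Int.sum_Icc_id_mul_two hbc
    - (3 * (a + 1 - b)) * Int.sum_Icc_sq_mul_six hbc

/-- For all `λ' ∈ ℤ³_+`, `λ'' ∈ ℤ²_+` one has `I(r(λ',λ'')) = 0`; consequently `I`
vanishes on the `ℤ`-span of all restriction elements, i.e. on the image
`Res(K⁰(K))` of the restriction map for `G = SU(3,2)`. -/
theorem invariant_vanishes_on_image :
    (∀ a b c d e : ℤ, b ≤ a → c ≤ b → e ≤ d → Ifun (rSU32 a b c d e) = 0) ∧
      ∀ x ∈ Submodule.span ℤ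
        {x : FSU32 | ∃ a b c d e : ℤ, b ≤ a ∧ c ≤ b ∧ e ≤ d ∧ x = rSU32 a b c d e},
        Ifun x = 0 := by
  have hr : ∀ a b c d e : ℤ, b ≤ a → c ≤ b → e ≤ d → Ifun (rSU32 a b c d e) = 0 :=
    fun a b c d e hba hcb hed => by
      rw [Ifun_rSU32 (by omega), sum_Icc_Icc_eq_zero (by omega) (by omega), mul_zero]
  refine ⟨hr, fun x hx => ?_⟩
  have hspan : Submodule.span ℤ
      {x : FSU32 | ∃ a b c d e : ℤ, b ≤ a ∧ c ≤ b ∧ e ≤ d ∧ x = rSU32 a b c d e} ≤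
        LinearMap.ker IfunLinear :=
    Submodule.span_le.mpr <| by
      rintro _ ⟨a, b, c, d, e, hba, hcb, hed, rfl⟩
      exact hr a b c d e hba hcb hed
  exact hspan hx
end

section
/- Let n ≥ 2, let λ ∈ ℤ^n satisfy λ_1 ≥ λ_2 ≥ … ≥ λ_n, let ν ∈ ℤ^{n−2} satisfy ν_1 ≥ … ≥ ν_{n−2}, and assume λ_i ≥ ν_i ≥ λ_{i+2} for all 1 ≤ i ≤ n−2. Then λ_1 − Σ_{i=2}^{n−1} |λ_i − ν_{i−1}| − λ_n ≥ 0. -/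
lemma p_aux (n0 : ℕ) (L N : ℕ → ℤ)
    (hL : ∀ i, i ≤ n0 → L (i+1) ≤ L i)
    (hN1 : ∀ i, i < n0 → N i ≤ L i)
    (hN2 : ∀ i, i < n0 → L (i+2) ≤ N i)
    (hNm : ∀ i, i + 1 < n0 → N (i+1) ≤ N i) :
    ∀ k, 1 ≤ k → k ≤ n0 →
      ∑ i ∈ Finset.range k, |L (i+1) - N i| ≤ L 0 - min (N (k-1)) (L k) := by
  intro k
  induction k with
  | zero => intro h; omega
  | succ k ih =>
    intro _ hk
    rcases Nat.eq_zero_or_pos k with rfl | hk1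
    · rw [Finset.sum_range_succ, Finset.sum_range_zero]
      have h1 := hL 0 (by omega)
      have h2 := hN1 0 (by omega)
      simp only [Nat.add_sub_cancel]
      rcases abs_cases (L (0+1) - N 0) with ⟨h, _⟩ | ⟨h, _⟩ <;> omega
    · have IH := ih hk1 (by omega)
      rw [Finset.sum_range_succ]
      have h1 := hL k (by omega)
      have h2 := hN2 (k-1) (by omega)
      have h3 := hNm (k-1) (by omega)
      have h4 := hN1 k (by omega)
      have hkk : k - 1 + 1 = k := by omega
      rw [hkk] at h3
      have hkk2 : k - 1 + 2 = k + 1 := by omega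
      rw [hkk2] at h2
      have : |L (k+1) - N k| ≤ min (N (k-1)) (L k) - min (N k) (L (k+1)) := by
        rcases abs_cases (L (k+1) - N k) with ⟨h, _⟩ | ⟨h, _⟩ <;> omega
      simp only [Nat.add_sub_cancel]
      omega

/-- Let `n ≥ 2` (here `n = n0 + 2`), let `λ ∈ ℤ^n` and `ν ∈ ℤ^{n-2}` be weakly
decreasing and satisfy the two-step interlacing condition `λ_i ≥ ν_i ≥ λ_{i+2}`.
Then `λ_1 − Σ_{i=2}^{n−1} |λ_i − ν_{i−1}| − λ_n ≥ 0`. -/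
theorem p_nonneg (n0 : ℕ) (l : Fin (n0 + 2) → ℤ)
    (hl : ∀ i j : Fin (n0 + 2), i ≤ j → l j ≤ l i)
    (ν : Fin n0 → ℤ) (hν : ∀ i j : Fin n0, i ≤ j → ν j ≤ ν i)
    (hinter : ∀ i : Fin n0, ν i ≤ l i.castSucc.castSucc ∧ l i.succ.succ ≤ ν i) :
    0 ≤ l 0 - (∑ i : Fin n0, |l i.succ.castSucc - ν i|) - l (Fin.last (n0 + 1)) := by
  rcases Nat.eq_zero_or_pos n0 with rfl | hn
  · simp only [Finset.univ_eq_empty, Finset.sum_empty]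
    have := hl 0 (Fin.last (0 + 1)) (by decide)
    omega
  · set L : ℕ → ℤ := fun i => l ⟨min i (n0+1), by omega⟩ with hLdef
    set N : ℕ → ℤ := fun i => ν ⟨min i (n0-1), by omega⟩ with hNdef
    have hLval : ∀ (i : ℕ) (h : i ≤ n0+1), L i = l ⟨i, by omega⟩ := by
      intro i h
      simp only [hLdef]
      congr 1
      simp only [Fin.mk.injEq]
      omega
    have hNval : ∀ (i : ℕ) (h : i < n0), N i = ν ⟨i, h⟩ := by
      intro i h
      simp only [hNdef]
      congr 1
      simp only [Fin.mk.injEq]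
      omega
    have hcs : ∀ (i : ℕ) (h : i < n0),
        (⟨i, h⟩ : Fin n0).castSucc.castSucc = (⟨i, by omega⟩ : Fin (n0+2)) := by
      intro i h; rfl
    have hss : ∀ (i : ℕ) (h : i < n0),
        (⟨i, h⟩ : Fin n0).succ.succ = (⟨i+2, by omega⟩ : Fin (n0+2)) := by
      intro i h; rfl
    have hL : ∀ i, i ≤ n0 → L (i+1) ≤ L i := by
      intro i hi
      rw [hLval i (by omega), hLval (i+1) (by omega)]
      exact hl _ _ (by simp [Fin.le_def])
    have hN1 : ∀ i, i < n0 → N i ≤ L i := by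
      intro i hi
      rw [hNval i hi, hLval i (by omega)]
      have := (hinter ⟨i, hi⟩).1
      rwa [hcs i hi] at this
    have hN2 : ∀ i, i < n0 → L (i+2) ≤ N i := by
      intro i hi
      rw [hNval i hi, hLval (i+2) (by omega)]
      have := (hinter ⟨i, hi⟩).2
      rwa [hss i hi] at this
    have hNm : ∀ i, i + 1 < n0 → N (i+1) ≤ N i := by
      intro i hi
      rw [hNval i (by omega), hNval (i+1) hi]
      exact hν _ _ (by simp [Fin.le_def])
    have key := p_aux n0 L N hL hN1 hN2 hNm n0 hn le_rfl
    have hsum : (∑ i : Fin n0, |l i.succ.castSucc - ν i|)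
        = ∑ i ∈ Finset.range n0, |L (i+1) - N i| := by
      rw [← Fin.sum_univ_eq_sum_range (fun i => |L (i+1) - N i|) n0]
      apply Finset.sum_congr rfl
      intro i _
      have e1 : (i.succ.castSucc : Fin (n0+2)) = ⟨i.val+1, by omega⟩ := Fin.ext (by simp)
      rw [e1, hLval (i.val+1) (by omega), hNval i.val i.isLt]
    have h2 := hN2 (n0-1) (by omega)
    have hLlast : l (Fin.last (n0+1)) = L (n0+1) := by
      rw [hLval (n0+1) le_rfl]
      rfl
    have hL0 : l 0 = L 0 := by
      rw [hLval 0 (by omega)]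
      rfl
    have hLn : L (n0 - 1 + 2) = L (n0 + 1) := by
      congr 1; omega
    rw [hLn] at h2
    have h3 := hL n0 le_rfl
    rw [hsum, hLlast, hL0]
    omega
end
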